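/- Let F be the free group on generators a and b. For integers P ≥ 2 and S ≥ 2, the element α = a^P·b^S is not primitive in F. -/

import Mathlib

/-!
If `e` is an automorphism of `F₂ = ⟨a, b⟩` with `e a = w`, precomposition with `e` shows that for
every finite group `G` the homomorphisms `F₂ → G` killing `w` are as many as those killing `a`,
namely `|G|`. For `w = a^P b^S` this fails in the affine group `K ⋊ Kˣ` of `K = 𝔽_p`, where `p` is
a prime with `|P| |S| ∣ p - 1` (Dirichlet): choosing units `u, v ≠ 1` with `u^P = v^S = 1`, every
assignment `a ↦ (x ↦ u x + c)`, `b ↦ (x ↦ v x + d)` kills `w`, since an affine map with linear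
part `u ≠ 1` is conjugate to `x ↦ u x`. That gives `p² > p (p - 1)` homomorphisms.
-/

open FreeGroup (of lift)
open SemidirectProduct (inl inr)

section

variable {G H H' : Type*} [Group G] [Group H] [Group H']

lemma MulEquiv.card_hom_apply_eq_one (e : H ≃* H') (w : H) :
    Nat.card {φ : H' →* G // φ (e w) = 1} = Nat.card {φ : H →* G // φ w = 1} :=
  Nat.card_congr <| e.monoidHomCongrLeftEquiv.symm.subtypeEquiv fun φ => by simp

lemma FreeGroup.card_hom_of_eq_one {α : Type*} [DecidableEq α] (i : α) :
    Nat.card {φ : FreeGroup α →* G // φ (of i) = 1} = Nat.card ({j // j ≠ i} → G) := by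
  have hval (f : α → G) : f i = 1 ↔ f ∘ Subtype.val = fun _ : {j // j = i} => 1 :=
    ⟨fun hf => funext fun ⟨_, hj⟩ => hj ▸ hf, fun hf => congrFun hf ⟨i, rfl⟩⟩
  exact Nat.card_congr <| (lift.symm.subtypeEquiv fun φ => hval (φ ∘ of)).trans
    (Equiv.subtypePreimage (· = i) fun _ => 1)

end

lemma exists_ne_one_zpow_eq_one {G : Type*} [Group G] [Finite G] {n : ℤ} (hn : n.natAbs ≠ 1)
    (hdvd : n.natAbs ∣ Nat.card G) : ∃ g : G, g ≠ 1 ∧ g ^ n = 1 := by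
  have hq : n.natAbs.minFac.Prime := Nat.minFac_prime hn
  have : Fact n.natAbs.minFac.Prime := ⟨hq⟩
  obtain ⟨g, hg⟩ := exists_prime_orderOf_dvd_card' _ ((Nat.minFac_dvd _).trans hdvd)
  refine ⟨g, fun h => hq.one_lt.ne' (by rw [← hg, h, orderOf_one]), ?_⟩
  rw [← orderOf_dvd_iff_zpow_eq_one, hg, Int.natCast_dvd]
  exact Nat.minFac_dvd _

section AffineGroup

variable (R : Type*) [Ring R]

def affineAction : Rˣ →* MulAut (Multiplicative R) :=
  (MulAutMultiplicative R).symm.toMonoidHom.comp (DistribMulAction.toAddAut Rˣ R)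

/-- `⟨ofAdd c, u⟩` is the affine map `x ↦ u * x + c`. -/
abbrev AffineGroup := Multiplicative R ⋊[affineAction R] Rˣ

variable {R}

@[simp]
lemma affineAction_apply (u : Rˣ) (x : Multiplicative R) :
    affineAction R u x = Multiplicative.ofAdd (u * x.toAdd) := rfl

instance [Finite R] : Finite (AffineGroup R) := Finite.of_equiv _ SemidirectProduct.equivProd.symm

lemma AffineGroup.card_of_field (K : Type*) [Field K] :
    Nat.card (AffineGroup K) = Nat.card K * (Nat.card K - 1) := by
  rw [SemidirectProduct.card, Nat.card_units]
  rfl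

variable {K : Type*} [Field K]

lemma AffineGroup.eq_conj_inr (c : K) {u : Kˣ} (hu : u ≠ 1) :
    (⟨Multiplicative.ofAdd c, u⟩ : AffineGroup K) =
      inl (Multiplicative.ofAdd (c / (1 - u))) * inr u *
        (inl (Multiplicative.ofAdd (c / (1 - u))))⁻¹ := by
  have : (1 - u : K) ≠ 0 := sub_ne_zero.mpr fun h => hu (Units.ext h.symm)
  ext
  · simp only [toAdd_ofAdd, SemidirectProduct.mul_left, SemidirectProduct.left_inl,
      SemidirectProduct.right_inl, map_one, SemidirectProduct.left_inr, MulAut.one_apply, mul_one,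
      SemidirectProduct.mul_right, SemidirectProduct.right_inr, one_mul,
      SemidirectProduct.inv_left, inv_one, affineAction_apply, toAdd_inv, mul_neg, ofAdd_neg,
      toAdd_mul]
    field_simp
    ring
  · simp

lemma AffineGroup.zpow_eq_one (c : K) {u : Kˣ} (hu : u ≠ 1) {n : ℤ} (hn : u ^ n = 1) :
    (⟨Multiplicative.ofAdd c, u⟩ : AffineGroup K) ^ n = 1 := by
  rw [AffineGroup.eq_conj_inr c hu, conj_zpow, ← map_zpow, hn]
  simp

lemma AffineGroup.sq_card_le_card_hom [Finite K] {P S : ℤ} {u v : Kˣ} (hu : u ≠ 1) (hv : v ≠ 1)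
    (huP : u ^ P = 1) (hvS : v ^ S = 1) :
    Nat.card K ^ 2 ≤
      Nat.card {φ : FreeGroup (Fin 2) →* AffineGroup K // φ (of 0 ^ P * of 1 ^ S) = 1} := by
  have : Finite (FreeGroup (Fin 2) →* AffineGroup K) := Finite.of_equiv _ lift
  let hom (c : K × K) :
      {φ : FreeGroup (Fin 2) →* AffineGroup K // φ (of 0 ^ P * of 1 ^ S) = 1} :=
    ⟨lift ![⟨Multiplicative.ofAdd c.1, u⟩, ⟨Multiplicative.ofAdd c.2, v⟩], by
      rw [map_mul, map_zpow, map_zpow, FreeGroup.lift_apply_of, FreeGroup.lift_apply_of]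
      simp only [Fin.isValue, Matrix.cons_val_zero, Matrix.cons_val_one]
      rw [AffineGroup.zpow_eq_one _ hu huP, AffineGroup.zpow_eq_one _ hv hvS, one_mul]⟩
  have hom_injective : Function.Injective hom := by
    intro c d h
    have h0 : c.1 = d.1 := by
      simpa [hom] using congrArg (fun φ => (φ.1 (of 0)).left.toAdd) h
    have h1 : c.2 = d.2 := by
      simpa [hom] using congrArg (fun φ => (φ.1 (of 1)).left.toAdd) h
    exact Prod.ext h0 h1
  simpa [sq] using Nat.card_le_card_of_injective hom hom_injective

end AffineGroup

theorem stmt_17 (P S : ℤ) (hP : 2 ≤ P) (hS : 2 ≤ S)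
    (a b : FreeGroup (Fin 2)) (ha : a = FreeGroup.of 0) (hb : b = FreeGroup.of 1) :
    ¬ ∃ e : FreeGroup (Fin 2) ≃* FreeGroup (Fin 2), e (FreeGroup.of 0) = a ^ P * b ^ S := by
  rintro ⟨e, he⟩
  subst ha hb
  obtain ⟨p, hp, -, hp1⟩ :=
    Nat.exists_prime_gt_modEq_one (k := P.natAbs * S.natAbs) 0
      (Nat.mul_ne_zero (by omega) (by omega))
  have : Fact p.Prime := ⟨hp⟩
  have hcard : P.natAbs * S.natAbs ∣ Nat.card (ZMod p)ˣ := by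
    rw [Nat.card_units, Nat.card_zmod]
    exact (Nat.modEq_iff_dvd' hp.one_le).mp hp1.symm
  obtain ⟨u, hu, huP⟩ := exists_ne_one_zpow_eq_one (by omega) ((dvd_mul_right _ _).trans hcard)
  obtain ⟨v, hv, hvS⟩ := exists_ne_one_zpow_eq_one (by omega) ((dvd_mul_left _ _).trans hcard)
  have hle := AffineGroup.sq_card_le_card_hom hu hv huP hvS
  have hrank : Nat.card {j : Fin 2 // j ≠ 0} = 1 := by simp
  rw [← he, e.card_hom_apply_eq_one, FreeGroup.card_hom_of_eq_one, Nat.card_fun, hrank, pow_one,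
    AffineGroup.card_of_field, Nat.card_zmod, sq] at hle
  have hp_pos := hp.pos
  have := Nat.le_of_mul_le_mul_left hle hp_pos
  omega
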